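/- arXiv:1509.08853 — 2 statements merged into one kernel-verified Lean document; each statement's English description precedes it below -/
import Mathlib

section
/- Let γ ∈ NC(n) have blocks B_1,…,B_s of cardinalities k_1,…,k_s. Then the poset [γ] = {σ ∈ NCL(n) : c(σ) = γ} is isomorphic as an ordered set to the product [1_{k_1}] × ⋯ × [1_{k_s}], where [1_k] denotes the set of connected non-crossing linked partitions of {1,…,k} (those τ ∈ NCL(k) with c(τ) the one-block partition). -/
open Finset

/-- Two blocks cross if there are i < k < p < q with i,p in one and k,q in the other. -/
def Crossing {α : Type*} [LinearOrder α] (B D : Finset α) : Prop :=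
  ∃ i ∈ B, ∃ p ∈ B, ∃ k ∈ D, ∃ q ∈ D, i < k ∧ k < p ∧ p < q

/-- A family of blocks is non-crossing. -/
def IsNonCrossing {α : Type*} [LinearOrder α] (P : Finset (Finset α)) : Prop :=
  ∀ B ∈ P, ∀ D ∈ P, B ≠ D → ¬ Crossing B D

/-- Non-crossing partitions of {1, ..., n}, modelled on `Fin n`. -/
def NC (n : ℕ) : Set (Finset (Finset (Fin n))) :=
  {P | (∀ B ∈ P, B.Nonempty) ∧ (∀ a : Fin n, ∃! B, B ∈ P ∧ a ∈ B) ∧ IsNonCrossing P}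

/-- Reversed refinement order: every block of `π` is contained in a block of `σ`. -/
def ncle {n : ℕ} (π σ : Finset (Finset (Fin n))) : Prop :=
  ∀ B ∈ π, ∃ D ∈ σ, B ⊆ D

/-- the position of `i` (an element "i") in the interlaced set 1 < 1̄ < 2 < 2̄ < ... -/
def oddE (n : ℕ) (i : Fin n) : Fin (2 * n) := ⟨2 * i.1, by have := i.2; omega⟩

/-- the position of `ī` (a "barred" element) in the interlaced set. -/
def evenE (n : ℕ) (i : Fin n) : Fin (2 * n) := ⟨2 * i.1 + 1, by have := i.2; omega⟩

/-- `γ ∪ σ` viewed on the interlaced set 1 < 1̄ < 2 < 2̄ < ... < n < n̄. -/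
def interlace {n : ℕ} (γ σ : Finset (Finset (Fin n))) : Finset (Finset (Fin (2 * n))) :=
  γ.image (fun B => B.image (oddE n)) ∪ σ.image (fun B => B.image (evenE n))

/-- `σ` is the Kreweras complement of `γ`: the largest non-crossing partition of the
barred copies such that `γ ∪ σ` is non-crossing on the interlaced set. -/
def IsKreweras {n : ℕ} (γ σ : Finset (Finset (Fin n))) : Prop :=
  σ ∈ NC n ∧ IsNonCrossing (interlace γ σ) ∧
    ∀ τ ∈ NC n, IsNonCrossing (interlace γ τ) → ncle τ σ

/-- Non-crossing linked partitions of {1,…,n}: blocks are nonempty, cover everything, are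
mutually non-crossing, any two blocks meet in at most one element, and a common element
forces both blocks to have ≥ 2 elements and to be minimal in exactly one of them. -/
def NCL (n : ℕ) : Set (Finset (Finset (Fin n))) :=
  {P | (∀ B ∈ P, B.Nonempty) ∧ (∀ a : Fin n, ∃ B ∈ P, a ∈ B) ∧ IsNonCrossing P ∧
    ∀ B ∈ P, ∀ D ∈ P, B ≠ D → (B ∩ D).card ≤ 1 ∧
      ∀ j ∈ B ∩ D, 2 ≤ B.card ∧ 2 ≤ D.card ∧ ((∀ b ∈ B, j ≤ b) ↔ ¬ ∀ b ∈ D, j ≤ b)}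

/-- A block `B` of a non-crossing linked partition `π` is exterior if no other block `D`
contains elements `l, s` with `l ≤ min B` and `max B < s`. -/
def IsExtL {n : ℕ} (π : Finset (Finset (Fin n))) (B : Finset (Fin n)) : Prop :=
  ¬ ∃ D ∈ π, D ≠ B ∧ ∃ l ∈ D, ∃ s ∈ D, ∀ b ∈ B, l ≤ b ∧ b < s

/-- `i` and `j` are connected in `π`: joined by a chain of pairwise intersecting blocks. -/
def Connected {n : ℕ} (π : Finset (Finset (Fin n))) (i j : Fin n) : Prop :=
  Relation.ReflTransGen (fun a b => ∃ B ∈ π, a ∈ B ∧ b ∈ B) i j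

/-- `γ` is the non-crossing partition `c(π)` of connected components of `π`: `i, j` lie in
a common block of `γ` iff they are connected in `π`. -/
def cIs {n : ℕ} (π γ : Finset (Finset (Fin n))) : Prop :=
  ∀ i j : Fin n, (∃ B ∈ γ, i ∈ B ∧ j ∈ B) ↔ Connected π i j

/-- The order on `NCL(n)`: `π ⪰ σ` iff every block of `π` is a union of blocks of `σ`. -/
def nclge {n : ℕ} (π σ : Finset (Finset (Fin n))) : Prop :=
  ∀ B ∈ π, ∃ S ⊆ σ, B = S.sup id

namespace Stmt10
variable {n : ℕ} {B : Finset (Fin n)}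

def f (B : Finset (Fin n)) (i : Fin B.card) : Fin n := B.orderEmbOfFin rfl i

def down (B D : Finset (Fin n)) : Finset (Fin B.card) := univ.filter (fun i => f B i ∈ D)

def up (B : Finset (Fin n)) (t : Finset (Fin B.card)) : Finset (Fin n) := t.image (f B)

lemma f_lt_iff {i j} : f B i < f B j ↔ i < j := (B.orderEmbOfFin rfl).lt_iff_lt
lemma f_le_iff {i j} : f B i ≤ f B j ↔ i ≤ j := (B.orderEmbOfFin rfl).le_iff_le
lemma f_inj : Function.Injective (f B) := (B.orderEmbOfFin rfl).injective
lemma f_mem (i) : f B i ∈ B := B.orderEmbOfFin_mem rfl i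
lemma f_surj {a} (ha : a ∈ B) : ∃ i, f B i = a := by
  have h := B.range_orderEmbOfFin rfl
  have : a ∈ Set.range (B.orderEmbOfFin rfl) := by rw [h]; exact_mod_cast ha
  exact this

lemma mem_down {D : Finset (Fin n)} {i} : i ∈ down B D ↔ f B i ∈ D := by
  simp [down]

lemma mem_up {t : Finset (Fin B.card)} {a} : a ∈ up B t ↔ ∃ i ∈ t, f B i = a := by
  simp [up]

lemma up_subset {t} : up B t ⊆ B := by
  intro a ha
  obtain ⟨i, _, rfl⟩ := mem_up.1 ha
  exact f_mem i

lemma up_down {D : Finset (Fin n)} (hD : D ⊆ B) : up B (down B D) = D := by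
  ext a
  constructor
  · intro ha; obtain ⟨i, hi, rfl⟩ := mem_up.1 ha; exact mem_down.1 hi
  · intro ha
    obtain ⟨i, rfl⟩ := f_surj (hD ha)
    exact mem_up.2 ⟨i, mem_down.2 ha, rfl⟩

lemma down_up {t : Finset (Fin B.card)} : down B (up B t) = t := by
  ext i
  rw [mem_down, mem_up]
  constructor
  · rintro ⟨j, hj, hji⟩; rwa [f_inj hji] at hj
  · intro hi; exact ⟨i, hi, rfl⟩

lemma up_inj : Function.Injective (up B) := by
  intro t s h
  rw [← down_up (t := t), ← down_up (t := s), h]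

lemma card_up {t} : (up B t).card = t.card := card_image_of_injective _ f_inj

lemma up_nonempty {t} : (up B t).Nonempty ↔ t.Nonempty := by
  simp [up, image_nonempty]

lemma up_inter {t s} : up B (t ∩ s) = up B t ∩ up B s := by
  simpa [up] using image_inter t s f_inj

lemma crossing_up {t s} : Crossing (up B t) (up B s) ↔ Crossing t s := by
  constructor
  · rintro ⟨i, hi, p, hp, k, hk, q, hq, h1, h2, h3⟩
    obtain ⟨i', hi', rfl⟩ := mem_up.1 hi
    obtain ⟨p', hp', rfl⟩ := mem_up.1 hp
    obtain ⟨k', hk', rfl⟩ := mem_up.1 hk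
    obtain ⟨q', hq', rfl⟩ := mem_up.1 hq
    exact ⟨i', hi', p', hp', k', hk', q', hq', f_lt_iff.1 h1, f_lt_iff.1 h2, f_lt_iff.1 h3⟩
  · rintro ⟨i, hi, p, hp, k, hk, q, hq, h1, h2, h3⟩
    exact ⟨f B i, mem_up.2 ⟨i, hi, rfl⟩, f B p, mem_up.2 ⟨p, hp, rfl⟩,
      f B k, mem_up.2 ⟨k, hk, rfl⟩, f B q, mem_up.2 ⟨q, hq, rfl⟩,
      f_lt_iff.2 h1, f_lt_iff.2 h2, f_lt_iff.2 h3⟩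

lemma min_up {t j} : (∀ b ∈ up B t, f B j ≤ b) ↔ ∀ b ∈ t, j ≤ b := by
  constructor
  · intro h b hb; exact f_le_iff.1 (h _ (mem_up.2 ⟨b, hb, rfl⟩))
  · intro h b hb; obtain ⟨i, hi, rfl⟩ := mem_up.1 hb; exact f_le_iff.2 (h i hi)



/-! partition lemmas -/
variable {γ σ : Finset (Finset (Fin n))}

lemma unique_block (hγ : γ ∈ NC n) {B D : Finset (Fin n)} {a : Fin n}
    (hB : B ∈ γ) (hD : D ∈ γ) (haB : a ∈ B) (haD : a ∈ D) : B = D := by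
  obtain ⟨-, h, -⟩ := hγ
  obtain ⟨E, -, hu⟩ := h a
  rw [hu B ⟨hB, haB⟩, hu D ⟨hD, haD⟩]

lemma rel_trans (hγ : γ ∈ NC n) {a b c : Fin n}
    (h1 : ∃ B ∈ γ, a ∈ B ∧ b ∈ B) (h2 : ∃ B ∈ γ, b ∈ B ∧ c ∈ B) :
    ∃ B ∈ γ, a ∈ B ∧ c ∈ B := by
  obtain ⟨B, hB, haB, hbB⟩ := h1
  obtain ⟨D, hD, hbD, hcD⟩ := h2
  exact ⟨B, hB, haB, (unique_block hγ hB hD hbB hbD) ▸ hcD⟩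

/-- each block of `σ` is contained in some block of `γ` when `c(σ) = γ`. -/
lemma block_subset (hγ : γ ∈ NC n) (hσ : σ ∈ NCL n) (hc : cIs σ γ) {C : Finset (Fin n)} (hC : C ∈ σ) :
    ∃ B ∈ γ, C ⊆ B := by
  obtain ⟨a, ha⟩ := hσ.1 C hC
  obtain ⟨B, hB, haB, -⟩ := (hc a a).2 (Relation.ReflTransGen.refl)
  refine ⟨B, hB, fun c hc' => ?_⟩
  obtain ⟨D, hD, haD, hcD⟩ := (hc a c).2 (Relation.ReflTransGen.single ⟨C, hC, ha, hc'⟩)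
  exact (unique_block hγ hB hD haB haD) ▸ hcD


lemma step_subset (hγ : γ ∈ NC n) (hσ : σ ∈ NCL n) (hc : cIs σ γ)
    {B C : Finset (Fin n)} {a : Fin n} (hB : B ∈ γ) (hC : C ∈ σ) (haC : a ∈ C) (haB : a ∈ B) :
    C ⊆ B := by
  obtain ⟨B', hB', hCB'⟩ := block_subset hγ hσ hc hC
  rwa [unique_block hγ hB' hB (hCB' haC) haB] at hCB'

def restrict (σ : Finset (Finset (Fin n))) (B : Finset (Fin n)) : Finset (Finset (Fin B.card)) :=
  (σ.filter (· ⊆ B)).image (down B)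

lemma mem_restrict {B : Finset (Fin n)} {t : Finset (Fin B.card)} :
    t ∈ restrict σ B ↔ ∃ C ∈ σ, C ⊆ B ∧ t = down B C := by
  simp only [restrict, mem_image, mem_filter]
  constructor
  · rintro ⟨C, ⟨h1, h2⟩, rfl⟩; exact ⟨C, h1, h2, rfl⟩
  · rintro ⟨C, h1, h2, rfl⟩; exact ⟨C, ⟨h1, h2⟩, rfl⟩

lemma conn_restrict (hγ : γ ∈ NC n) (hσ : σ ∈ NCL n) (hc : cIs σ γ) {B : Finset (Fin n)}
    (hB : B ∈ γ) {i j : Fin B.card} (h : Connected σ (f B i) (f B j)) :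
    Connected (restrict σ B) i j := by
  have key : ∀ y, Connected σ (f B i) y →
      ∃ jy : Fin B.card, f B jy = y ∧ Connected (restrict σ B) i jy := by
    intro y hy
    induction hy with
    | refl => exact ⟨i, rfl, Relation.ReflTransGen.refl⟩
    | tail hab hbc ih =>
      obtain ⟨jb, hjb, hconn⟩ := ih
      obtain ⟨C, hC, hbC, hcC⟩ := hbc
      have hCB : C ⊆ B := step_subset hγ hσ hc hB hC hbC (hjb ▸ f_mem jb)
      obtain ⟨jc, hjc⟩ := f_surj (hCB hcC)
      refine ⟨jc, hjc, hconn.tail ⟨down B C, mem_restrict.2 ⟨C, hC, hCB, rfl⟩,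
        mem_down.2 (hjb ▸ hbC), mem_down.2 (hjc ▸ hcC)⟩⟩
  obtain ⟨jy, hjy, hconn⟩ := key _ h
  rwa [f_inj hjy] at hconn

lemma conn_up {B : Finset (Fin n)} {τ : Finset (Finset (Fin B.card))}
    (hup : ∀ t ∈ τ, up B t ∈ σ) {i j : Fin B.card} (h : Connected τ i j) :
    Connected σ (f B i) (f B j) := by
  induction h with
  | refl => exact Relation.ReflTransGen.refl
  | tail hab hbc ih =>
    obtain ⟨t, ht, h1, h2⟩ := hbc
    exact ih.tail ⟨up B t, hup t ht, mem_up.2 ⟨_, h1, rfl⟩, mem_up.2 ⟨_, h2, rfl⟩⟩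

lemma conn_to_rel (hγ : γ ∈ NC n)
    (hsub : ∀ C ∈ σ, ∃ B ∈ γ, C ⊆ B) {i j : Fin n} (h : Connected σ i j) :
    ∃ B ∈ γ, i ∈ B ∧ j ∈ B := by
  induction h with
  | refl =>
    obtain ⟨B, hB⟩ := hγ.2.1 i
    exact ⟨B, hB.1.1, hB.1.2, hB.1.2⟩
  | tail hab hbc ih =>
    obtain ⟨C, hC, h1, h2⟩ := hbc
    obtain ⟨B, hB, hCB⟩ := hsub C hC
    exact rel_trans hγ ih ⟨B, hB, hCB h1, hCB h2⟩

lemma down_inter {B C D : Finset (Fin n)} : down B (C ∩ D) = down B C ∩ down B D := by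
  ext i; simp [mem_down, mem_inter]

lemma card_down {B D : Finset (Fin n)} (hD : D ⊆ B) : (down B D).card = D.card := by
  conv_rhs => rw [← up_down hD]
  rw [card_up]

lemma down_nonempty {B D : Finset (Fin n)} (hD : D ⊆ B) (hne : D.Nonempty) :
    (down B D).Nonempty := by
  obtain ⟨a, ha⟩ := hne
  obtain ⟨i, rfl⟩ := f_surj (hD ha)
  exact ⟨i, mem_down.2 ha⟩

lemma min_down {B C : Finset (Fin n)} (hC : C ⊆ B) {j : Fin B.card} :
    (∀ b ∈ down B C, j ≤ b) ↔ ∀ b ∈ C, f B j ≤ b := by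
  conv_rhs => rw [← up_down hC]
  exact min_up.symm

lemma crossing_mono {C D X Y : Finset (Fin n)} (h : Crossing C D) (hX : C ⊆ X) (hY : D ⊆ Y) :
    Crossing X Y := by
  obtain ⟨i, hi, p, hp, k, hk, q, hq, h1, h2, h3⟩ := h
  exact ⟨i, hX hi, p, hX hp, k, hY hk, q, hY hq, h1, h2, h3⟩

lemma restrict_NCL (hγ : γ ∈ NC n) (hσ : σ ∈ NCL n) (hc : cIs σ γ) {B : Finset (Fin n)}
    (hB : B ∈ γ) : restrict σ B ∈ NCL B.card := by
  obtain ⟨hne, hcov, hncr, hlink⟩ := hσ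
  refine ⟨?_, ?_, ?_, ?_⟩
  · rintro t ht
    obtain ⟨C, hC, hCB, rfl⟩ := mem_restrict.1 ht
    exact down_nonempty hCB (hne C hC)
  · intro a
    obtain ⟨C, hC, haC⟩ := hcov (f B a)
    have hCB : C ⊆ B := step_subset hγ ⟨hne, hcov, hncr, hlink⟩ hc hB hC haC (f_mem a)
    exact ⟨down B C, mem_restrict.2 ⟨C, hC, hCB, rfl⟩, mem_down.2 haC⟩
  · rintro t ht s hs hts hcr
    obtain ⟨C, hC, hCB, rfl⟩ := mem_restrict.1 ht
    obtain ⟨D, hD, hDB, rfl⟩ := mem_restrict.1 hs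
    have hCD : C ≠ D := fun h => hts (h ▸ rfl)
    refine hncr C hC D hD hCD ?_
    rw [← up_down hCB, ← up_down hDB]
    exact crossing_up.2 hcr
  · rintro t ht s hs hts
    obtain ⟨C, hC, hCB, rfl⟩ := mem_restrict.1 ht
    obtain ⟨D, hD, hDB, rfl⟩ := mem_restrict.1 hs
    have hCD : C ≠ D := fun h => hts (h ▸ rfl)
    obtain ⟨hcard, hmin⟩ := hlink C hC D hD hCD
    constructor
    · rw [← down_inter, card_down (inter_subset_left.trans hCB)]
      exact hcard
    · intro j hj
      rw [← down_inter, mem_down] at hj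
      obtain ⟨h2C, h2D, hiff⟩ := hmin (f B j) hj
      refine ⟨by rwa [card_down hCB], by rwa [card_down hDB], ?_⟩
      rw [min_down hCB, min_down hDB]
      exact hiff

lemma restrict_cIs (hγ : γ ∈ NC n) (hσ : σ ∈ NCL n) (hc : cIs σ γ) {B : Finset (Fin n)}
    (hB : B ∈ γ) : cIs (restrict σ B) {(Finset.univ : Finset (Fin B.card))} := by
  intro i j
  constructor
  · intro _
    exact conn_restrict hγ hσ hc hB ((hc (f B i) (f B j)).1 ⟨B, hB, f_mem i, f_mem j⟩)
  · intro _
    exact ⟨Finset.univ, Finset.mem_singleton_self _, mem_univ i, mem_univ j⟩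

def glue (γ : Finset (Finset (Fin n)))
    (F : ∀ B : {B : Finset (Fin n) // B ∈ γ}, Finset (Finset (Fin B.1.card))) :
    Finset (Finset (Fin n)) :=
  γ.attach.biUnion (fun B => (F B).image (up B.1))

lemma mem_glue {γ : Finset (Finset (Fin n))}
    {F : ∀ B : {B : Finset (Fin n) // B ∈ γ}, Finset (Finset (Fin B.1.card))}
    {C : Finset (Fin n)} :
    C ∈ glue γ F ↔ ∃ B : {B : Finset (Fin n) // B ∈ γ}, ∃ t ∈ F B, C = up B.1 t := by
  simp only [glue, mem_biUnion, mem_attach, mem_image, true_and]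
  constructor
  · rintro ⟨B, t, ht, rfl⟩; exact ⟨B, t, ht, rfl⟩
  · rintro ⟨B, t, ht, rfl⟩; exact ⟨B, t, ht, rfl⟩

section Glue

variable {γ : Finset (Finset (Fin n))}
  {F : ∀ B : {B : Finset (Fin n) // B ∈ γ}, Finset (Finset (Fin B.1.card))}

lemma glue_NCL (hγ : γ ∈ NC n) (hF : ∀ B, F B ∈ NCL B.1.card) : glue γ F ∈ NCL n := by
  refine ⟨?_, ?_, ?_, ?_⟩
  · rintro C hC
    obtain ⟨B, t, ht, rfl⟩ := mem_glue.1 hC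
    exact up_nonempty.2 ((hF B).1 t ht)
  · intro a
    obtain ⟨B, ⟨hB, haB⟩, -⟩ := hγ.2.1 a
    obtain ⟨i, rfl⟩ := f_surj haB
    obtain ⟨t, ht, hit⟩ := (hF ⟨B, hB⟩).2.1 i
    exact ⟨up B t, mem_glue.2 ⟨⟨B, hB⟩, t, ht, rfl⟩, mem_up.2 ⟨i, hit, rfl⟩⟩
  · rintro C hC D hD hCD hcr
    obtain ⟨B, t, ht, rfl⟩ := mem_glue.1 hC
    obtain ⟨B', s, hs, rfl⟩ := mem_glue.1 hD
    by_cases hBB : B = B'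
    · subst hBB
      exact (hF B).2.2.1 t ht s hs (fun h => hCD (h ▸ rfl)) (crossing_up.1 hcr)
    · exact hγ.2.2 B.1 B.2 B'.1 B'.2 (fun h => hBB (Subtype.ext h))
        (crossing_mono hcr up_subset up_subset)
  · rintro C hC D hD hCD
    obtain ⟨B, t, ht, rfl⟩ := mem_glue.1 hC
    obtain ⟨B', s, hs, rfl⟩ := mem_glue.1 hD
    by_cases hBB : B = B'
    · subst hBB
      have hts : t ≠ s := fun h => hCD (h ▸ rfl)
      obtain ⟨hcard, hmin⟩ := (hF B).2.2.2 t ht s hs hts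
      constructor
      · rw [← up_inter, card_up]; exact hcard
      · intro j hj
        rw [← up_inter] at hj
        obtain ⟨i, hi, rfl⟩ := mem_up.1 hj
        obtain ⟨h2t, h2s, hiff⟩ := hmin i hi
        refine ⟨by rwa [card_up], by rwa [card_up], ?_⟩
        rw [min_up, min_up]
        exact hiff
    · have hdisj : up B.1 t ∩ up B'.1 s = ∅ := by
        rw [eq_empty_iff_forall_notMem]
        intro a ha
        rw [mem_inter] at ha
        exact hBB (Subtype.ext (unique_block hγ B.2 B'.2 (up_subset ha.1) (up_subset ha.2)))
      rw [hdisj]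
      exact ⟨by simp, by simp⟩

lemma glue_cIs (hγ : γ ∈ NC n) (hF : ∀ B, cIs (F B) {(Finset.univ : Finset (Fin B.1.card))}) :
    cIs (glue γ F) γ := by
  intro i j
  constructor
  · rintro ⟨B, hB, hi, hj⟩
    obtain ⟨i', rfl⟩ := f_surj hi
    obtain ⟨j', rfl⟩ := f_surj hj
    have hconn : Connected (F ⟨B, hB⟩) i' j' :=
      (hF ⟨B, hB⟩ i' j').1 ⟨Finset.univ, Finset.mem_singleton_self _, mem_univ _, mem_univ _⟩
    exact conn_up (fun t ht => mem_glue.2 ⟨⟨B, hB⟩, t, ht, rfl⟩) hconn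
  · intro h
    refine conn_to_rel hγ ?_ h
    intro C hC
    obtain ⟨B, t, ht, rfl⟩ := mem_glue.1 hC
    exact ⟨B.1, B.2, up_subset⟩

end Glue

section Inv

variable {γ : Finset (Finset (Fin n))}
  {F : ∀ B : {B : Finset (Fin n) // B ∈ γ}, Finset (Finset (Fin B.1.card))}

lemma restrict_glue (hγ : γ ∈ NC n) (hFne : ∀ B, ∀ t ∈ F B, t.Nonempty)
    (B : {B : Finset (Fin n) // B ∈ γ}) : restrict (glue γ F) B.1 = F B := by
  ext t
  rw [mem_restrict]
  constructor
  · rintro ⟨C, hC, hCB, rfl⟩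
    obtain ⟨B', s, hs, rfl⟩ := mem_glue.1 hC
    obtain ⟨a, ha⟩ := up_nonempty.2 (hFne B' s hs)
    have hBB : B' = B := Subtype.ext (unique_block hγ B'.2 B.2 (up_subset ha) (hCB ha))
    subst hBB
    rwa [down_up]
  · intro ht
    exact ⟨up B.1 t, mem_glue.2 ⟨B, t, ht, rfl⟩, up_subset, (down_up).symm⟩

lemma glue_restrict (hγ : γ ∈ NC n) (hσ : σ ∈ NCL n) (hc : cIs σ γ) :
    glue γ (fun B => restrict σ B.1) = σ := by
  ext C
  rw [mem_glue]
  constructor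
  · rintro ⟨B, t, ht, rfl⟩
    obtain ⟨D, hD, hDB, rfl⟩ := mem_restrict.1 ht
    rwa [up_down hDB]
  · intro hC
    obtain ⟨B, hB, hCB⟩ := block_subset hγ hσ hc hC
    exact ⟨⟨B, hB⟩, down B C, mem_restrict.2 ⟨C, hC, hCB, rfl⟩, (up_down hCB).symm⟩

lemma nclge_restrict {σ₁ σ₂ : Finset (Finset (Fin n))} (h : nclge σ₁ σ₂)
    {B : Finset (Fin n)} : nclge (restrict σ₁ B) (restrict σ₂ B) := by
  rintro t ht
  obtain ⟨C, hC, hCB, rfl⟩ := mem_restrict.1 ht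
  obtain ⟨S, hS, rfl⟩ := h C hC
  refine ⟨S.image (down B), ?_, ?_⟩
  · intro s hs
    obtain ⟨D, hD, rfl⟩ := mem_image.1 hs
    exact mem_restrict.2 ⟨D, hS hD, (le_sup (f := id) hD).trans hCB, rfl⟩
  · ext i
    simp only [mem_down, Finset.mem_sup, id_eq, mem_image]
    constructor
    · rintro ⟨D, hD, hiD⟩; exact ⟨down B D, ⟨D, hD, rfl⟩, mem_down.2 hiD⟩
    · rintro ⟨s, ⟨D, hD, rfl⟩, hi⟩; exact ⟨D, hD, mem_down.1 hi⟩

lemma nclge_glue (hγ : γ ∈ NC n) {σ₁ σ₂ : Finset (Finset (Fin n))}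
    (h1 : σ₁ ∈ NCL n) (hc1 : cIs σ₁ γ) (h2 : σ₂ ∈ NCL n) (hc2 : cIs σ₂ γ)
    (h : ∀ B : {B : Finset (Fin n) // B ∈ γ}, nclge (restrict σ₁ B.1) (restrict σ₂ B.1)) :
    nclge σ₁ σ₂ := by
  intro C hC
  obtain ⟨B, hB, hCB⟩ := block_subset hγ h1 hc1 hC
  obtain ⟨S', hS', hsup⟩ := h ⟨B, hB⟩ (down B C) (mem_restrict.2 ⟨C, hC, hCB, rfl⟩)
  refine ⟨S'.image (up B), ?_, ?_⟩
  · intro D hD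
    obtain ⟨s, hs, rfl⟩ := mem_image.1 hD
    obtain ⟨D', hD', hD'B, rfl⟩ := mem_restrict.1 (hS' hs)
    rwa [up_down hD'B]
  · ext a
    constructor
    · intro ha
      obtain ⟨i, rfl⟩ := f_surj (hCB ha)
      have : i ∈ S'.sup id := hsup ▸ mem_down.2 ha
      obtain ⟨s, hs, his⟩ := Finset.mem_sup.1 this
      exact Finset.mem_sup.2 ⟨up B s, mem_image.2 ⟨s, hs, rfl⟩, mem_up.2 ⟨i, his, rfl⟩⟩
    · intro ha
      obtain ⟨D, hD, haD⟩ := Finset.mem_sup.1 ha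
      obtain ⟨s, hs, rfl⟩ := mem_image.1 hD
      obtain ⟨i, hi, rfl⟩ := mem_up.1 haD
      have : i ∈ down B C := hsup ▸ Finset.mem_sup.2 ⟨s, hs, hi⟩
      exact mem_down.1 this

end Inv

end Stmt10

/-- for `γ ∈ NC(n)` with blocks `B₁,…,Bₛ` of sizes `k₁,…,kₛ`, the poset
`[γ] = {σ ∈ NCL(n) : c(σ) = γ}` is order-isomorphic to `[1_{k₁}] × ⋯ × [1_{kₛ}]`, where
`[1_k]` is the set of connected non-crossing linked partitions of {1,…,k}. -/
theorem stmt10 (n : ℕ) (γ : Finset (Finset (Fin n))) (hγ : γ ∈ NC n) :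
    ∃ e : {σ : Finset (Finset (Fin n)) // σ ∈ NCL n ∧ cIs σ γ} ≃
        (∀ B : {B : Finset (Fin n) // B ∈ γ},
          {τ : Finset (Finset (Fin B.1.card)) // τ ∈ NCL B.1.card ∧
            cIs τ {(Finset.univ : Finset (Fin B.1.card))}}),
      ∀ σ₁ σ₂, nclge σ₁.1 σ₂.1 ↔ ∀ B, nclge (e σ₁ B).1 (e σ₂ B).1 := by
  classical
  refine ⟨{
    toFun := fun σ B => ⟨Stmt10.restrict σ.1 B.1,
      Stmt10.restrict_NCL hγ σ.2.1 σ.2.2 B.2,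
      Stmt10.restrict_cIs hγ σ.2.1 σ.2.2 B.2⟩,
    invFun := fun F => ⟨Stmt10.glue γ (fun B => (F B).1),
      Stmt10.glue_NCL hγ (fun B => (F B).2.1),
      Stmt10.glue_cIs hγ (fun B => (F B).2.2)⟩,
    left_inv := fun σ => Subtype.ext (Stmt10.glue_restrict hγ σ.2.1 σ.2.2),
    right_inv := fun F => funext fun B => Subtype.ext
      (Stmt10.restrict_glue hγ (fun B' t ht => (F B').2.1.1 t ht) B) }, ?_⟩
  intro σ₁ σ₂
  constructor
  · intro h B
    exact Stmt10.nclge_restrict h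
  · intro h
    exact Stmt10.nclge_glue hγ σ₁.2.1 σ₁.2.2 σ₂.2.1 σ₂.2.2 h
end

section
/- There is a bijection Θ from the set [1_n] of connected non-crossing linked partitions of {1,…,n} onto the set 𝔗(n) of planar rooted trees with n vertices, under which blocks of the linked partition correspond to the elementary subtrees (a root together with its offsprings) of the tree. -/
open Finset

/-- The offsprings of the vertex `v` in the tree given by the parent function `p`. -/
def offspring {n : ℕ} (p : Fin n → Fin n) (v : Fin n) : Finset (Fin n) :=
  Finset.univ.filter (fun j => p j = v ∧ j ≠ v)

/-- `p` is the parent function of a planar rooted tree on `Fin n`, rooted at `0`, whose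
labels are the left depth-first order (children being ordered by their labels): the
parent of each non-root vertex `i` lies on the rightmost path of the tree on `{0,…,i-1}`,
i.e. is an iterated parent of `i - 1`. -/
def IsDFSTree {n : ℕ} (p : Fin n → Fin n) : Prop :=
  (∀ i : Fin n, i.1 = 0 → p i = i) ∧
  (∀ i : Fin n, 0 < i.1 → p i < i) ∧
  (∀ i : Fin n, 0 < i.1 → ∃ m : ℕ,
    p i = p^[m] ⟨i.1 - 1, lt_of_le_of_lt (Nat.sub_le _ _) i.2⟩)

/-!
Every element but the least of a connected non-crossing linked partition is non-minimal in
exactly one block: uniqueness is the linking condition, and existence is a count, since the graph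
joining each non-minimal element to the minimum of its block is connected and so has at least
`n - 1` edges. The parent of `x` in `Θ(π)` is the minimum of that block; non-crossing makes it an
ancestor of `x - 1`, i.e. the labels are the depth-first order. Conversely, the elementary
subtrees of a depth-first tree are non-crossing because the descendants of each vertex form an
interval of labels.
-/

open Function in
theorem Function.IsFixedPt.eq_of_connected {α : Type*} [Finite α] {f : α → α}
    (hf : (SimpleGraph.fromRel fun x y => f x = y).Connected) {x y : α}
    (hx : IsFixedPt f x) (hy : IsFixedPt f y) : x = y := by
  by_contra hxy
  have hedges : (SimpleGraph.fromRel fun x y => f x = y).edgeSet ⊆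
      (fun z => s(z, f z)) '' {x, y}ᶜ := by
    intro e he
    induction e using Sym2.ind with | _ a b => ?_
    obtain ⟨hab, rfl | rfl⟩ :=
      (SimpleGraph.fromRel_adj _ a b).1 ((SimpleGraph.mem_edgeSet _).1 he)
    · exact ⟨a, by grind [IsFixedPt], rfl⟩
    · exact ⟨b, by grind [IsFixedPt], Sym2.eq_swap⟩
  have hcard := hf.card_vert_le_card_edgeSet_add_one
  rw [Nat.card_coe_set_eq] at hcard
  have hpair := Set.ncard_add_ncard_compl {x, y}
  rw [Set.ncard_pair hxy] at hpair
  have := (Set.ncard_le_ncard hedges).trans Set.ncard_image_le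
  omega

variable {n : ℕ}

theorem Connected.symm {π : Finset (Finset (Fin n))} {i j : Fin n} (h : Connected π i j) :
    Connected π j i := by
  induction h with
  | refl => exact .refl
  | tail _ hbc ih =>
    obtain ⟨B, hB, hb, hc⟩ := hbc
    exact .head ⟨B, hB, hc, hb⟩ ih

theorem cIs_singleton_univ_iff {π : Finset (Finset (Fin n))} :
    cIs π {univ} ↔ ∀ i j, Connected π i j := by
  simp [cIs]

/-- The parent function of `Θ(π)`: an element that is non-minimal in a block goes to the minimum
of that block, an element that is minimal in all its blocks to itself. -/
def nclParent (π : Finset (Finset (Fin n))) (x : Fin n) : Fin n :=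
  (insert x ((π.filter (x ∈ ·)).biUnion id)).min' (insert_nonempty _ _)

section LinkedPartition

variable {π : Finset (Finset (Fin n))}

theorem nclParent_le (x : Fin n) : nclParent π x ≤ x :=
  min'_le _ _ (mem_insert_self _ _)

theorem nclParent_of_val_eq_zero {x : Fin n} (hx : x.1 = 0) : nclParent π x = x :=
  le_antisymm (nclParent_le x) (Fin.le_def.2 (by omega))

theorem exists_mem_of_nclParent_ne {x : Fin n} (h : nclParent π x ≠ x) :
    ∃ B ∈ π, x ∈ B ∧ nclParent π x ∈ B := by
  have hmem := min'_mem (insert x ((π.filter (x ∈ ·)).biUnion id)) (insert_nonempty _ _)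
  rcases mem_insert.1 hmem with hx | hB
  · exact absurd hx h
  · obtain ⟨B, hB, hpB⟩ := mem_biUnion.1 hB
    exact ⟨B, (mem_filter.1 hB).1, (mem_filter.1 hB).2, hpB⟩

variable (hπ : π ∈ NCL n)
include hπ

theorem NCL.eq_of_mem_of_forall_le_iff {B D : Finset (Fin n)} (hB : B ∈ π) (hD : D ∈ π)
    {j : Fin n} (hjB : j ∈ B) (hjD : j ∈ D) (h : (∀ b ∈ B, j ≤ b) ↔ ∀ d ∈ D, j ≤ d) :
    B = D := by
  by_contra hBD
  have := ((hπ.2.2.2 B hB D hD hBD).2 j (mem_inter.2 ⟨hjB, hjD⟩)).2.2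
  tauto

theorem nclParent_eq_min' {B : Finset (Fin n)} (hB : B ∈ π) {x b : Fin n} (hx : x ∈ B)
    (hb : b ∈ B) (hbx : b < x) : nclParent π x = B.min' ⟨b, hb⟩ := by
  have hle : nclParent π x ≤ B.min' ⟨b, hb⟩ :=
    min'_le _ _ (mem_insert_of_mem (mem_biUnion.2 ⟨B, mem_filter.2 ⟨hB, hx⟩, min'_mem _ _⟩))
  have hlt : nclParent π x < x := hle.trans_lt ((min'_le _ _ hb).trans_lt hbx)
  obtain ⟨C, hC, hxC, hpC⟩ := exists_mem_of_nclParent_ne hlt.ne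
  obtain rfl : C = B := NCL.eq_of_mem_of_forall_le_iff hπ hC hB hxC hx
    (iff_of_false (fun h => (h _ hpC).not_gt hlt) (fun h => (h b hb).not_gt hbx))
  exact le_antisymm hle (min'_le _ _ hpC)

theorem reachable_of_connected {i j : Fin n} (h : Connected π i j) :
    (SimpleGraph.fromRel fun x y => nclParent π x = y).Reachable i j := by
  have hmin : ∀ B ∈ π, ∀ x (hx : x ∈ B),
      (SimpleGraph.fromRel fun x y => nclParent π x = y).Reachable x (B.min' ⟨x, hx⟩) := by
    intro B hB x hx
    rcases (min'_le B x hx).eq_or_lt with h | h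
    · rw [h]
    · exact ((SimpleGraph.fromRel_adj _ _ _).2
        ⟨h.ne', Or.inl (nclParent_eq_min' hπ hB hx (min'_mem _ _) h)⟩).reachable
  induction h with
  | refl => rfl
  | tail _ hbc ih =>
    obtain ⟨B, hB, hb, hc⟩ := hbc
    exact ih.trans ((hmin B hB _ hb).trans (hmin B hB _ hc).symm)

theorem offspring_nclParent_min' {B : Finset (Fin n)} (hB : B ∈ π) (hne : B.Nonempty) :
    offspring (nclParent π) (B.min' hne) = B.erase (B.min' hne) := by
  ext j
  simp only [offspring, mem_filter, mem_univ, true_and, mem_erase]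
  constructor
  · rintro ⟨hpj, hjv⟩
    have hne' : nclParent π j ≠ j := hpj.trans_ne hjv.symm
    obtain ⟨D, hD, hjD, hpD⟩ := exists_mem_of_nclParent_ne hne'
    have hDmin := nclParent_eq_min' hπ hD hjD hpD ((nclParent_le j).lt_of_ne hne')
    obtain rfl : D = B := NCL.eq_of_mem_of_forall_le_iff hπ hD hB (hpj ▸ hpD) (min'_mem _ _)
      (iff_of_true (fun d hd => hpj ▸ hDmin ▸ min'_le _ _ hd) (fun b hb => min'_le _ _ hb))
    exact ⟨hjv, hjD⟩
  · rintro ⟨hjv, hjB⟩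
    exact ⟨nclParent_eq_min' hπ hB hjB (min'_mem _ _) ((min'_le _ _ hjB).lt_of_ne' hjv), hjv⟩

variable (hc : cIs π {univ})
include hc

theorem nclParent_lt {x : Fin n} (hx : 0 < x.1) : nclParent π x < x := by
  have hconn : (SimpleGraph.fromRel fun x y => nclParent π x = y).Connected :=
    (SimpleGraph.connected_iff _).2
      ⟨fun i j => reachable_of_connected hπ (cIs_singleton_univ_iff.1 hc i j), ⟨x⟩⟩
  refine (nclParent_le x).lt_of_ne fun hfix => hx.ne' ?_
  exact congrArg Fin.val <|
    Function.IsFixedPt.eq_of_connected hconn hfix (nclParent_of_val_eq_zero (x := ⟨0, x.pos⟩) rfl)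

theorem exists_iterate_nclParent_eq_min' {B : Finset (Fin n)} (hB : B ∈ π) {i : Fin n}
    (hi : i ∈ B) (j : Fin n) (hvj : B.min' ⟨i, hi⟩ ≤ j) (hji : j < i) :
    ∃ m, (nclParent π)^[m] j = B.min' ⟨i, hi⟩ := by
  induction j using WellFoundedLT.induction with
  | _ j ih =>
  rcases hvj.eq_or_lt with h | h
  · exact ⟨0, h.symm⟩
  have hpj := nclParent_lt hπ hc (lt_of_le_of_lt (Nat.zero_le _) h)
  rcases le_or_gt (B.min' ⟨i, hi⟩) (nclParent π j) with hle | hlt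
  · obtain ⟨m, hm⟩ := ih _ hpj hle (hpj.trans hji)
    exact ⟨m + 1, by rwa [Function.iterate_succ_apply]⟩
  · obtain ⟨D, hD, hjD, hpD⟩ := exists_mem_of_nclParent_ne hpj.ne
    have hDB : D ≠ B := by
      rintro rfl
      exact (min'_le _ _ hpD).not_gt hlt
    exact (hπ.2.2.1 D hD B hB hDB ⟨_, hpD, j, hjD, _, min'_mem _ _, i, hi, hlt, h, hji⟩).elim

theorem isDFSTree_nclParent : IsDFSTree (nclParent π) := by
  refine ⟨fun i => nclParent_of_val_eq_zero, fun i => nclParent_lt hπ hc, fun i hi => ?_⟩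
  have hlt := nclParent_lt hπ hc hi
  obtain ⟨B, hB, hiB, hpB⟩ := exists_mem_of_nclParent_ne hlt.ne
  have hparent := nclParent_eq_min' hπ hB hiB hpB hlt
  rw [hparent] at hlt ⊢
  obtain ⟨m, hm⟩ := exists_iterate_nclParent_eq_min' hπ hc hB hiB ⟨i.1 - 1, by omega⟩
    (Fin.le_def.2 (Nat.le_sub_one_of_lt (Fin.lt_def.1 hlt))) (Fin.lt_def.2 (Nat.sub_lt hi one_pos))
  exact ⟨m, hm.symm⟩

theorem NCL.two_le_card (hn : 2 ≤ n) {B : Finset (Fin n)} (hB : B ∈ π) : 2 ≤ B.card := by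
  obtain ⟨x, hx⟩ := hπ.1 B hB
  by_contra! hcard
  have honly : ∀ C ∈ π, x ∈ C → C = B := fun C hC hxC => by
    by_contra hCB
    have := ((hπ.2.2.2 C hC B hB hCB).2 x (mem_inter.2 ⟨hxC, hx⟩)).2.1
    omega
  have hstuck : ∀ y, Connected π x y → y = x := by
    intro y hy
    induction hy with
    | refl => rfl
    | tail _ hbc ih =>
      obtain ⟨C, hC, hbC, hcC⟩ := hbc
      subst ih
      rw [honly C hC hbC] at hcC
      exact card_le_one.1 (by omega) _ hcC _ hx
  have : Nontrivial (Fin n) := Fin.nontrivial_iff_two_le.2 hn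
  obtain ⟨y, hy⟩ := exists_ne x
  exact hy (hstuck y (cIs_singleton_univ_iff.1 hc x y))

end LinkedPartition

theorem mem_insert_offspring {p : Fin n → Fin n} {v x : Fin n} :
    x ∈ insert v (offspring p v) ↔ x = v ∨ p x = v ∧ x ≠ v := by
  simp [offspring]

theorem two_le_card_insert_offspring {p : Fin n → Fin n} {v : Fin n}
    (h : (offspring p v).Nonempty) : 2 ≤ (insert v (offspring p v)).card := by
  rw [card_insert_of_notMem (by simp [offspring])]
  exact Nat.succ_le_succ (card_pos.2 h)

theorem mem_inter_insert_offspring {p : Fin n → Fin n} {v w x : Fin n} (hvw : v ≠ w)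
    (hv : x ∈ insert v (offspring p v)) (hw : x ∈ insert w (offspring p w)) :
    x = v ∧ p v = w ∨ x = w ∧ p w = v := by
  grind [mem_insert_offspring]

/-- In the one-vertex tree the root alone counts as an elementary subtree. -/
def treeBlocks (p : Fin n → Fin n) : Finset (Finset (Fin n)) :=
  (univ.filter fun v => (offspring p v).Nonempty ∨ n = 1).image fun v => insert v (offspring p v)

theorem mem_treeBlocks {p : Fin n → Fin n} {B : Finset (Fin n)} :
    B ∈ treeBlocks p ↔
      ∃ v, B = insert v (offspring p v) ∧ ((offspring p v).Nonempty ∨ n = 1) := by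
  simp only [treeBlocks, mem_image, mem_filter, mem_univ, true_and]
  exact ⟨fun ⟨v, hv, hB⟩ => ⟨v, hB.symm, hv⟩, fun ⟨v, hB, hv⟩ => ⟨v, hv, hB.symm⟩⟩

def IsAncestor (p : Fin n → Fin n) (v w : Fin n) : Prop :=
  ∃ k, p^[k] w = v

namespace IsAncestor

variable {p : Fin n → Fin n} {u v w : Fin n}

theorem of_apply_eq (h : p w = v) : IsAncestor p v w :=
  ⟨1, h⟩

theorem trans (h₁ : IsAncestor p u v) (h₂ : IsAncestor p v w) : IsAncestor p u w := by
  obtain ⟨k, rfl⟩ := h₁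
  obtain ⟨l, rfl⟩ := h₂
  exact ⟨k + l, Function.iterate_add_apply p k l w⟩

theorem apply_of_ne (h : IsAncestor p v w) (hne : v ≠ w) : IsAncestor p v (p w) := by
  obtain ⟨_ | k, rfl⟩ := h
  · exact absurd rfl hne
  · exact ⟨k, (Function.iterate_succ_apply p k w).symm⟩

end IsAncestor

namespace IsDFSTree

variable {p : Fin n → Fin n} (hp : IsDFSTree p)
include hp

theorem apply_le (i : Fin n) : p i ≤ i := by
  rcases Nat.eq_zero_or_pos i.1 with h | h
  · exact (hp.1 i h).le
  · exact (hp.2.1 i h).le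

theorem lt_of_apply_eq {v w : Fin n} (h : p v = w) (hne : v ≠ w) : w < v :=
  h ▸ (hp.apply_le v).lt_of_ne (h ▸ hne.symm)

theorem le_of_mem_insert_offspring {v x : Fin n} (hx : x ∈ insert v (offspring p v)) : v ≤ x := by
  rcases mem_insert_offspring.1 hx with rfl | ⟨rfl, -⟩
  · exact le_rfl
  · exact hp.apply_le x

theorem forall_mem_insert_offspring_le_iff {v x : Fin n} :
    (∀ b ∈ insert v (offspring p v), x ≤ b) ↔ x ≤ v :=
  ⟨fun h => h v (mem_insert_self _ _), fun h _ hb => h.trans (hp.le_of_mem_insert_offspring hb)⟩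

theorem min'_insert_offspring (v : Fin n) (h : (insert v (offspring p v)).Nonempty) :
    (insert v (offspring p v)).min' h = v :=
  le_antisymm (min'_le _ _ (mem_insert_self _ _)) (hp.le_of_mem_insert_offspring (min'_mem _ _))

theorem le_of_isAncestor {v w : Fin n} (h : IsAncestor p v w) : v ≤ w := by
  obtain ⟨k, rfl⟩ := h
  induction k with
  | zero => exact le_rfl
  | succ k ih => exact (Function.iterate_succ_apply' p k w ▸ hp.apply_le _).trans ih

theorem isAncestor_of_le_of_le {u v w : Fin n} (h : IsAncestor p v w) (hvu : v ≤ u)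
    (huw : u ≤ w) : IsAncestor p v u := by
  induction w using WellFoundedLT.induction with
  | _ w ih =>
  rcases huw.eq_or_lt with rfl | huw
  · exact h
  have hw : 0 < w.1 := lt_of_le_of_lt (Nat.zero_le _) huw
  obtain ⟨m, hm⟩ := hp.2.2 w hw
  exact ih ⟨w.1 - 1, by omega⟩ (Fin.lt_def.2 (Nat.sub_lt hw one_pos))
    ((h.apply_of_ne (hvu.trans_lt huw).ne).trans ⟨m, hm.symm⟩)
    (Fin.le_def.2 (show u.1 ≤ w.1 - 1 by have := Fin.lt_def.1 huw; omega))

theorem not_crossing {v w : Fin n} (hvw : v ≠ w) :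
    ¬ Crossing (insert v (offspring p v)) (insert w (offspring p w)) := by
  rintro ⟨a, ha, b, hb, k, hk, q, hq, hak, hkb, hbq⟩
  have hva := hp.le_of_mem_insert_offspring ha
  have hwk := hp.le_of_mem_insert_offspring hk
  have hbv : p b = v :=
    ((mem_insert_offspring.1 hb).resolve_left (hva.trans_lt (hak.trans hkb)).ne').1
  have hqw : p q = w :=
    ((mem_insert_offspring.1 hq).resolve_left (hwk.trans_lt (hkb.trans hbq)).ne').1
  have hvk : IsAncestor p v k :=
    hp.isAncestor_of_le_of_le (.of_apply_eq hbv) (hva.trans hak.le) hkb.le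
  have hwb : IsAncestor p w b :=
    hp.isAncestor_of_le_of_le (.of_apply_eq hqw) (hwk.trans hkb.le) hbq.le
  have hwv : IsAncestor p w v := hbv ▸ hwb.apply_of_ne (hwk.trans_lt hkb).ne
  have hvw' : IsAncestor p v w := by
    rcases mem_insert_offspring.1 hk with rfl | ⟨hkw, -⟩
    · exact hvk
    · exact hkw ▸ hvk.apply_of_ne (hva.trans_lt hak).ne
  exact hvw (le_antisymm (hp.le_of_isAncestor hvw') (hp.le_of_isAncestor hwv))

theorem mem_offspring_apply {i : Fin n} (hi : 0 < i.1) : i ∈ offspring p (p i) := by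
  simp only [offspring, mem_filter, mem_univ, true_and]
  exact (hp.2.1 i hi).ne'

theorem insert_offspring_apply_mem_treeBlocks {i : Fin n} (hi : 0 < i.1) :
    insert (p i) (offspring p (p i)) ∈ treeBlocks p :=
  mem_treeBlocks.2 ⟨p i, rfl, Or.inl ⟨i, hp.mem_offspring_apply hi⟩⟩

theorem exists_mem_treeBlocks (a : Fin n) : ∃ B ∈ treeBlocks p, a ∈ B := by
  rcases Nat.eq_zero_or_pos a.1 with ha | ha
  · rcases eq_or_ne n 1 with hn | hn
    · exact ⟨_, mem_treeBlocks.2 ⟨a, rfl, Or.inr hn⟩, mem_insert_self _ _⟩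
    have hn : 1 < n := by have := a.pos; omega
    have hpa : p ⟨1, hn⟩ = a :=
      Fin.ext ((Nat.lt_one_iff.1 (Fin.lt_def.1 (hp.2.1 ⟨1, hn⟩ one_pos))).trans ha.symm)
    exact ⟨_, hp.insert_offspring_apply_mem_treeBlocks (i := ⟨1, hn⟩) one_pos,
      hpa ▸ mem_insert_self _ _⟩
  · exact ⟨_, hp.insert_offspring_apply_mem_treeBlocks ha,
      mem_insert_of_mem (hp.mem_offspring_apply ha)⟩

theorem treeBlocks_mem_NCL : treeBlocks p ∈ NCL n := by
  refine ⟨?_, hp.exists_mem_treeBlocks, ?_, ?_⟩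
  · intro B hB
    obtain ⟨v, rfl, -⟩ := mem_treeBlocks.1 hB
    exact insert_nonempty _ _
  · intro B hB D hD hBD
    obtain ⟨v, rfl, -⟩ := mem_treeBlocks.1 hB
    obtain ⟨w, rfl, -⟩ := mem_treeBlocks.1 hD
    exact hp.not_crossing (by rintro rfl; exact hBD rfl)
  · intro B hB D hD hBD
    obtain ⟨v, rfl, hv⟩ := mem_treeBlocks.1 hB
    obtain ⟨w, rfl, hw⟩ := mem_treeBlocks.1 hD
    have hvw : v ≠ w := by rintro rfl; exact hBD rfl
    have hn : n ≠ 1 := by rintro rfl; exact hvw (Subsingleton.elim v w)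
    have hno_cycle : ¬ (p v = w ∧ p w = v) := fun ⟨h₁, h₂⟩ =>
      (hp.lt_of_apply_eq h₁ hvw).not_gt (hp.lt_of_apply_eq h₂ hvw.symm)
    refine ⟨card_le_one.2 fun x hx y hy => ?_, fun j hj => ⟨two_le_card_insert_offspring
      (hv.resolve_right hn), two_le_card_insert_offspring (hw.resolve_right hn), ?_⟩⟩
    · rw [mem_inter] at hx hy
      have := mem_inter_insert_offspring hvw hx.1 hx.2
      have := mem_inter_insert_offspring hvw hy.1 hy.2
      grind
    · rw [mem_inter] at hj
      rw [hp.forall_mem_insert_offspring_le_iff, hp.forall_mem_insert_offspring_le_iff]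
      rcases mem_inter_insert_offspring hvw hj.1 hj.2 with ⟨rfl, h⟩ | ⟨rfl, h⟩
      · exact iff_of_true le_rfl (hp.lt_of_apply_eq h hvw).not_ge
      · exact iff_of_false (hp.lt_of_apply_eq h hvw.symm).not_ge (not_not.2 le_rfl)

theorem connected_treeBlocks (i j : Fin n) : Connected (treeBlocks p) i j := by
  have hroot : ∀ x : Fin n, Connected (treeBlocks p) x ⟨0, i.pos⟩ := by
    intro x
    induction x using WellFoundedLT.induction with
    | _ x ih =>
    rcases Nat.eq_zero_or_pos x.1 with hx | hx
    · rw [show x = ⟨0, i.pos⟩ from Fin.ext hx]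
      exact .refl
    · exact .head ⟨_, hp.insert_offspring_apply_mem_treeBlocks hx,
        mem_insert_of_mem (hp.mem_offspring_apply hx), mem_insert_self _ _⟩ (ih _ (hp.2.1 x hx))
  exact (hroot i).trans (hroot j).symm

theorem nclParent_treeBlocks : nclParent (treeBlocks p) = p := by
  funext x
  rcases Nat.eq_zero_or_pos x.1 with hx | hx
  · rw [nclParent_of_val_eq_zero hx, hp.1 x hx]
  · rw [nclParent_eq_min' hp.treeBlocks_mem_NCL (hp.insert_offspring_apply_mem_treeBlocks hx)
      (mem_insert_of_mem (hp.mem_offspring_apply hx)) (mem_insert_self _ _) (hp.2.1 x hx)]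
    exact hp.min'_insert_offspring _ _

end IsDFSTree

theorem treeBlocks_nclParent {π : Finset (Finset (Fin n))} (hπ : π ∈ NCL n)
    (hc : cIs π {univ}) : treeBlocks (nclParent π) = π := by
  ext B
  rw [mem_treeBlocks]
  constructor
  · rintro ⟨v, rfl, ⟨j, hj⟩ | rfl⟩
    · simp only [offspring, mem_filter, mem_univ, true_and] at hj
      have hpj : nclParent π j ≠ j := hj.1.trans_ne hj.2.symm
      obtain ⟨D, hD, hjD, hpD⟩ := exists_mem_of_nclParent_ne hpj
      have hDne : D.Nonempty := ⟨_, hpD⟩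
      obtain rfl : v = D.min' hDne :=
        hj.1.symm.trans (nclParent_eq_min' hπ hD hjD hpD ((nclParent_le j).lt_of_ne hpj))
      rwa [offspring_nclParent_min' hπ hD, insert_erase (min'_mem _ _)]
    · obtain ⟨D, hD, hvD⟩ := hπ.2.1 v
      rwa [Nonempty.eq_univ (insert_nonempty _ _), ← Nonempty.eq_univ ⟨v, hvD⟩]
  · intro hB
    have hne := hπ.1 B hB
    refine ⟨B.min' hne, ?_, or_iff_not_imp_right.2 fun hn => ?_⟩ <;>
      rw [offspring_nclParent_min' hπ hB hne]
    · exact (insert_erase (min'_mem _ _)).symm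
    have h2 : 2 ≤ B.card := NCL.two_le_card hπ hc (by have := (B.min' hne).pos; omega) hB
    rw [← card_pos, card_erase_of_mem (min'_mem _ _)]
    omega

def nclEquivDFSTree (n : ℕ) :
    {π : Finset (Finset (Fin n)) // π ∈ NCL n ∧ cIs π {univ}} ≃
      {p : Fin n → Fin n // IsDFSTree p} where
  toFun π := ⟨nclParent π.1, isDFSTree_nclParent π.2.1 π.2.2⟩
  invFun p := ⟨treeBlocks p.1, p.2.treeBlocks_mem_NCL,
    cIs_singleton_univ_iff.2 p.2.connected_treeBlocks⟩
  left_inv π := Subtype.ext (treeBlocks_nclParent π.2.1 π.2.2)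
  right_inv p := Subtype.ext p.2.nclParent_treeBlocks

theorem stmt11_general (n : ℕ) :
    ∃ Θ : {π : Finset (Finset (Fin n)) // π ∈ NCL n ∧
            cIs π {(Finset.univ : Finset (Fin n))}} ≃ {p : Fin n → Fin n // IsDFSTree p},
      ∀ π, ∀ B : Finset (Fin n), B ∈ π.1 ↔
        ∃ v : Fin n, B = insert v (offspring (Θ π).1 v) ∧
          ((offspring (Θ π).1 v).Nonempty ∨ n = 1) := by
  refine ⟨nclEquivDFSTree n, fun π B => ?_⟩
  conv_lhs => rw [← treeBlocks_nclParent π.2.1 π.2.2]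
  exact mem_treeBlocks

/-- there is a bijection `Θ` from the connected non-crossing linked
partitions of {1,…,n} onto the planar rooted trees with `n` vertices (labeled in left
depth-first order), under which the blocks of `π` are exactly the elementary subtrees
(a root together with its offsprings) of `Θ(π)`. -/
theorem stmt11 (n : ℕ) (hn : 1 ≤ n) :
    ∃ Θ : {π : Finset (Finset (Fin n)) // π ∈ NCL n ∧
            cIs π {(Finset.univ : Finset (Fin n))}} ≃ {p : Fin n → Fin n // IsDFSTree p},
      ∀ π, ∀ B : Finset (Fin n), B ∈ π.1 ↔
        ∃ v : Fin n, B = insert v (offspring (Θ π).1 v) ∧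
          ((offspring (Θ π).1 v).Nonempty ∨ n = 1) :=
  stmt11_general n
end
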